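/- arXiv:2105.00555 — 4 statements merged into one kernel-verified Lean document; each statement's English description precedes it below -/
import Mathlib

section
/- Let p_0, …, p_n (n ≥ 1) be the vertices of a left-turning polygonal arc in ℝ² with turning angles θ_1, …, θ_{n−1} ∈ (0, π) whose total curvature θ_1 + ⋯ + θ_{n−1} is at most π/2. Then the arc is radially monotone with respect to p_0; moreover for any two distinct points x, y on the arc such that x strictly precedes y in the traversal from p_0, one has ‖x − p_0‖ < ‖y − p_0‖ (in particular ‖p_j − p_0‖ < ‖p_k − p_0‖ whenever 0 ≤ j < k ≤ n). -/
open Real Finset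

/-- The planar cross product (2×2 determinant) of two vectors in `ℝ²`. -/
def detv (u v : EuclideanSpace ℝ (Fin 2)) : ℝ := u 0 * v 1 - u 1 * v 0

/-- `p 0, …, p n` is a polygonal arc (consecutive vertices distinct) which is left-turning with
turning angles `θ 1, …, θ (n-1) ∈ (0, π)`: at each interior vertex the oriented angle from the
incoming edge direction to the outgoing edge direction equals `θ j`; for `θ j ∈ (0, π)` this is
equivalent to the cross product of the two edge directions being positive together with the
unoriented angle between them being `θ j`. -/
def IsLeftTurningArc (p : ℕ → EuclideanSpace ℝ (Fin 2)) (θ : ℕ → ℝ) (n : ℕ) : Prop :=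
  (∀ j, j < n → p (j + 1) ≠ p j) ∧
  ∀ j, 1 ≤ j → j ≤ n - 1 →
    0 < θ j ∧ θ j < Real.pi ∧
    0 < detv (p j - p (j - 1)) (p (j + 1) - p j) ∧
    InnerProductGeometry.angle (p j - p (j - 1)) (p (j + 1) - p j) = θ j

/-!
Write `e j = p (j + 1) - p j` for the edge vectors. By the triangle inequality for unoriented
angles, the angle between `e i` and `e k` (`i ≤ k`) is at most the sum of the turning angles
strictly between them, hence at most `π / 2`, so `⟪e i, e k⟫ ≥ 0`. If `x` precedes `y`, then
`x - p 0` is a nonnegative combination of edges `e i` with `i ≤ j` and `y - x` one of edges `e m`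
with `m ≥ j`, so `⟪x - p 0, y - x⟫ ≥ 0`, and then `‖x - p 0‖² + ‖y - x‖² ≤ ‖y - p 0‖²`.
-/

open InnerProductGeometry
open scoped RealInnerProductSpace

section InnerProductSpace

variable {E : Type*} [NormedAddCommGroup E] [InnerProductSpace ℝ E]

theorem norm_sub_sq_add_norm_sub_sq_le_of_inner_nonneg {q x y : E}
    (h : 0 ≤ ⟪x - q, y - x⟫) : ‖x - q‖ ^ 2 + ‖y - x‖ ^ 2 ≤ ‖y - q‖ ^ 2 := by
  have := norm_add_sq_real (x - q) (y - x)
  rw [sub_add_sub_cancel'] at this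
  linarith

theorem norm_sub_le_norm_sub_of_inner_nonneg {q x y : E} (h : 0 ≤ ⟪x - q, y - x⟫) :
    ‖x - q‖ ≤ ‖y - q‖ := by
  have := norm_sub_sq_add_norm_sub_sq_le_of_inner_nonneg h
  exact pow_le_pow_iff_left₀ (norm_nonneg _) (norm_nonneg _) two_ne_zero |>.mp
    (by linarith [sq_nonneg ‖y - x‖])

theorem norm_sub_lt_norm_sub_of_inner_nonneg {q x y : E} (h : 0 ≤ ⟪x - q, y - x⟫)
    (hxy : x ≠ y) : ‖x - q‖ < ‖y - q‖ := by
  have := norm_sub_sq_add_norm_sub_sq_le_of_inner_nonneg h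
  have hpos : 0 < ‖y - x‖ := norm_pos_iff.mpr (sub_ne_zero.mpr hxy.symm)
  exact pow_lt_pow_iff_left₀ (norm_nonneg _) (norm_nonneg _) two_ne_zero |>.mp
    (by linarith [pow_pos hpos 2])

theorem inner_nonneg_of_angle_le_pi_div_two {x y : E} (h : angle x y ≤ π / 2) :
    0 ≤ ⟪x, y⟫ := by
  rw [← cos_angle_mul_norm_mul_norm]
  have := angle_nonneg x y
  exact mul_nonneg (Real.cos_nonneg_of_mem_Icc ⟨by linarith [Real.pi_pos], h⟩) (by positivity)

theorem exists_nonneg_smul_of_mem_segment {V : Type*} [AddCommGroup V] [Module ℝ V] {a b x : V}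
    (h : x ∈ segment ℝ a b) :
    ∃ s t : ℝ, 0 ≤ s ∧ 0 ≤ t ∧ x - a = s • (b - a) ∧ b - x = t • (b - a) := by
  rw [segment_eq_image'] at h
  obtain ⟨s, ⟨hs0, hs1⟩, rfl⟩ := h
  exact ⟨s, 1 - s, hs0, sub_nonneg.mpr hs1, add_sub_cancel_left _ _, by module⟩

variable (p : ℕ → E)

theorem angle_edge_le_sum_angle {i k : ℕ} (hik : i < k) :
    angle (p (i + 1) - p i) (p (k + 1) - p k) ≤
      ∑ j ∈ Finset.Ioc i k, angle (p j - p (j - 1)) (p (j + 1) - p j) := by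
  induction k, hik using Nat.le_induction with
  | base => simp
  | succ k hik ih =>
    rw [Finset.sum_Ioc_succ_top (by omega), Nat.add_sub_cancel]
    exact (angle_le_angle_add_angle _ (p (k + 1) - p k) _).trans (by linarith)

variable {n : ℕ}

theorem inner_edge_nonneg_of_sum_angle_le
    (hturn : ∑ j ∈ Finset.Icc 1 (n - 1), angle (p j - p (j - 1)) (p (j + 1) - p j) ≤ π / 2)
    {i k : ℕ} (hik : i ≤ k) (hk : k ≤ n - 1) :
    0 ≤ ⟪p (i + 1) - p i, p (k + 1) - p k⟫ := by
  rcases hik.eq_or_lt with rfl | hik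
  · exact real_inner_self_nonneg
  refine inner_nonneg_of_angle_le_pi_div_two ((angle_edge_le_sum_angle p hik).trans ?_)
  refine le_trans (Finset.sum_le_sum_of_subset_of_nonneg ?_ fun _ _ _ => angle_nonneg _ _) hturn
  intro j hj
  simp only [Finset.mem_Ioc, Finset.mem_Icc] at hj ⊢
  omega

theorem inner_sub_edge_nonneg_of_mem_segment
    (hturn : ∑ j ∈ Finset.Icc 1 (n - 1), angle (p j - p (j - 1)) (p (j + 1) - p j) ≤ π / 2)
    {j m : ℕ} {x : E}
    (hx : x ∈ segment ℝ (p j) (p (j + 1))) (hjm : j ≤ m) (hm : m ≤ n - 1) :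
    0 ≤ ⟪x - p 0, p (m + 1) - p m⟫ := by
  obtain ⟨s, -, hs, -, hxs, -⟩ := exists_nonneg_smul_of_mem_segment hx
  have hx0 : x - p 0 = ∑ i ∈ Finset.range j, (p (i + 1) - p i) + s • (p (j + 1) - p j) := by
    rw [Finset.sum_range_sub, ← hxs, sub_add_sub_cancel']
  rw [hx0, inner_add_left, sum_inner, real_inner_smul_left]
  have hedge := fun i (hi : i ≤ m) => inner_edge_nonneg_of_sum_angle_le p hturn hi hm
  exact add_nonneg (Finset.sum_nonneg fun i hi => hedge i (by rw [Finset.mem_range] at hi; omega))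
    (mul_nonneg hs (hedge j hjm))

theorem inner_sub_sub_nonneg_of_precedes
    (hturn : ∑ j ∈ Finset.Icc 1 (n - 1), angle (p j - p (j - 1)) (p (j + 1) - p j) ≤ π / 2)
    {j k : ℕ} (hk : k ≤ n - 1) {x y : E}
    (hx : x ∈ segment ℝ (p j) (p (j + 1))) (hy : y ∈ segment ℝ (p k) (p (k + 1)))
    (hxy : j < k ∨ (j = k ∧ x ∈ segment ℝ (p j) y)) :
    0 ≤ ⟪x - p 0, y - x⟫ := by
  have hedge m (hjm : j ≤ m) (hm : m ≤ n - 1) : 0 ≤ ⟪x - p 0, p (m + 1) - p m⟫ :=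
    inner_sub_edge_nonneg_of_mem_segment p hturn hx hjm hm
  obtain ⟨t, -, ht, -, hyt, -⟩ := exists_nonneg_smul_of_mem_segment hy
  rcases hxy with hjk | ⟨rfl, hxy⟩
  · obtain ⟨-, s, -, hs, -, hxs⟩ := exists_nonneg_smul_of_mem_segment hx
    have hyx : y - x =
        (p (j + 1) - x) + ∑ m ∈ Finset.Ico (j + 1) k, (p (m + 1) - p m) + (y - p k) := by
      rw [Finset.sum_Ico_sub p hjk]
      abel
    rw [hyx, hxs, hyt, inner_add_right, inner_add_right, inner_sum, real_inner_smul_right,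
      real_inner_smul_right]
    have hmid : ∀ m ∈ Finset.Ico (j + 1) k, 0 ≤ ⟪x - p 0, p (m + 1) - p m⟫ := fun m hm => by
      rw [Finset.mem_Ico] at hm
      exact hedge m (by omega) (by omega)
    exact add_nonneg (add_nonneg (mul_nonneg hs (hedge j le_rfl (by omega)))
      (Finset.sum_nonneg hmid)) (mul_nonneg ht (hedge k hjk.le hk))
  · obtain ⟨-, c, -, hc, -, hxc⟩ := exists_nonneg_smul_of_mem_segment hxy
    rw [hxc, hyt, smul_smul, real_inner_smul_right]
    exact mul_nonneg (mul_nonneg hc ht) (hedge j le_rfl hk)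

end InnerProductSpace

theorem radially_monotone_of_curvature_le_halfpi_general
    (n : ℕ) (p : ℕ → EuclideanSpace ℝ (Fin 2)) (θ : ℕ → ℝ)
    (harc : IsLeftTurningArc p θ n)
    (hcurv : (∑ j ∈ Finset.Icc 1 (n - 1), θ j) ≤ Real.pi / 2) :
    ∀ j k, j ≤ n - 1 → k ≤ n - 1 →
      ∀ x ∈ segment ℝ (p j) (p (j + 1)), ∀ y ∈ segment ℝ (p k) (p (k + 1)),
        (j < k ∨ (j = k ∧ x ∈ segment ℝ (p j) y)) →
          ‖x - p 0‖ ≤ ‖y - p 0‖ ∧ (x ≠ y → ‖x - p 0‖ < ‖y - p 0‖) := by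
  intro j k _ hk x hx y hy hxy
  have hturn :
      ∑ j ∈ Finset.Icc 1 (n - 1), angle (p j - p (j - 1)) (p (j + 1) - p j) ≤ π / 2 := by
    refine le_of_eq_of_le (Finset.sum_congr rfl fun i hi => ?_) hcurv
    rw [Finset.mem_Icc] at hi
    exact (harc.2 i hi.1 hi.2).2.2.2
  have h := inner_sub_sub_nonneg_of_precedes p hturn hk hx hy hxy
  exact ⟨norm_sub_le_norm_sub_of_inner_nonneg h, norm_sub_lt_norm_sub_of_inner_nonneg h⟩

/-- A left-turning polygonal arc of total curvature at most `π/2` is radially monotone with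
respect to its starting point `p 0`; moreover the distance to `p 0` is *strictly* increasing
along the arc: if `x` lies on the `j`-th edge and `y` on the `k`-th edge and `x` precedes `y`
in the traversal from `p 0` (i.e. `j < k`, or `j = k` and `x` lies between `p j` and `y`), then
`‖x - p 0‖ ≤ ‖y - p 0‖`, with strict inequality whenever `x ≠ y`. -/
theorem radially_monotone_of_curvature_le_halfpi
    (n : ℕ) (hn : 1 ≤ n) (p : ℕ → EuclideanSpace ℝ (Fin 2)) (θ : ℕ → ℝ)
    (harc : IsLeftTurningArc p θ n)
    (hcurv : (∑ j ∈ Finset.Icc 1 (n - 1), θ j) ≤ Real.pi / 2) :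
    ∀ j k, j ≤ n - 1 → k ≤ n - 1 →
      ∀ x ∈ segment ℝ (p j) (p (j + 1)), ∀ y ∈ segment ℝ (p k) (p (k + 1)),
        (j < k ∨ (j = k ∧ x ∈ segment ℝ (p j) y)) →
          ‖x - p 0‖ ≤ ‖y - p 0‖ ∧ (x ≠ y → ‖x - p 0‖ < ‖y - p 0‖) :=
  radially_monotone_of_curvature_le_halfpi_general n p θ harc hcurv
end

section
/- Let a, b, c be nonzero vectors in ℝ² such that ∠(a, c) > 0, ∠(c, b) > 0, ∠(a, c) + ∠(c, b) = ∠(a, b), and ∠(a, b) < π (so c points strictly between a and b). Let h > 0 and consider the vectors A = (a, 0), B = (b, 0), C = (c, h) in ℝ³. Then ∠(A, B) < ∠(A, C) + ∠(C, B) < π. (Note ∠(A, B) = ∠(a, b).) Consequently, the turning angle π − (∠(A,C) + ∠(C,B)) obtained after unfolding the two faces at a band vertex into a plane is strictly positive and strictly smaller than the turning angle π − ∠(a, b) of the projected (flat) configuration. -/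
/-!
The first inequality is the strict case of the triangle inequality for angles: equality would
force `C` into the cone spanned by `A` and `B`, which lies in the horizontal plane. For the
second, `∠(x, y) + ∠(y, z) < π` says exactly that `y` has positive inner product with
`x / ‖x‖ + z / ‖z‖`; since `A` and `B` are horizontal this inner product is the same for `C` as
for `c`, and it is positive for `c` because `∠(a, c) + ∠(c, b) = ∠(a, b) < π`.
-/

open Real InnerProductGeometry
open scoped RealInnerProductSpace NNReal

theorem InnerProductGeometry.angle_add_angle_lt_pi_iff {V : Type*} [NormedAddCommGroup V]
    [InnerProductSpace ℝ V] {x z : V} (hx : x ≠ 0) (hz : z ≠ 0) (y : V) :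
    angle x y + angle y z < π ↔ 0 < ‖z‖ * ⟪x, y⟫ + ‖x‖ * ⟪z, y⟫ := by
  rcases eq_or_ne y 0 with rfl | hy
  · simp
  have hcos : angle x y + angle y z < π ↔ cos (angle (-z) y) < cos (angle x y) := by
    rw [strictAntiOn_cos.lt_iff_gt ⟨angle_nonneg _ _, angle_le_pi _ _⟩
      ⟨angle_nonneg _ _, angle_le_pi _ _⟩, angle_neg_left, angle_comm y z]
    constructor <;> intro <;> linarith
  have hx' := norm_pos_iff.2 hx
  have hy' := norm_pos_iff.2 hy
  have hz' := norm_pos_iff.2 hz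
  rw [hcos, cos_angle, cos_angle, inner_neg_left, norm_neg, neg_div, neg_lt_iff_pos_add,
    div_add_div _ _ (by positivity) (by positivity), div_pos_iff_of_pos_right (by positivity),
    show ⟪x, y⟫ * (‖z‖ * ‖y‖) + ‖x‖ * ‖y‖ * ⟪z, y⟫ = ‖y‖ * (‖z‖ * ⟪x, y⟫ + ‖x‖ * ⟪z, y⟫) by
      ring,
    mul_pos_iff_of_pos_left hy']

section Horizontal

variable {x y : EuclideanSpace ℝ (Fin 3)} {u v : EuclideanSpace ℝ (Fin 2)}

theorem inner_eq_of_horizontal (hx : x 0 = u 0 ∧ x 1 = u 1 ∧ x 2 = 0)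
    (hy : y 0 = v 0 ∧ y 1 = v 1) : ⟪x, y⟫ = ⟪u, v⟫ := by
  simp [PiLp.inner_apply, Fin.sum_univ_three, Fin.sum_univ_two, hx.1, hx.2.1, hx.2.2, hy.1, hy.2]

theorem norm_eq_of_horizontal (hx : x 0 = u 0 ∧ x 1 = u 1 ∧ x 2 = 0) : ‖x‖ = ‖u‖ := by
  rw [norm_eq_sqrt_real_inner, norm_eq_sqrt_real_inner, inner_eq_of_horizontal hx ⟨hx.1, hx.2.1⟩]

theorem angle_eq_of_horizontal (hx : x 0 = u 0 ∧ x 1 = u 1 ∧ x 2 = 0)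
    (hy : y 0 = v 0 ∧ y 1 = v 1 ∧ y 2 = 0) : angle x y = angle u v := by
  rw [angle, angle, inner_eq_of_horizontal hx ⟨hy.1, hy.2.1⟩, norm_eq_of_horizontal hx,
    norm_eq_of_horizontal hy]

end Horizontal

theorem EuclideanSpace.notMem_span_pair_of_apply {ι : Type*} {x y z : EuclideanSpace ℝ ι} (i : ι)
    (hx : x i = 0) (hz : z i = 0) (hy : y i ≠ 0) : y ∉ Submodule.span ℝ≥0 {x, z} := by
  rw [Submodule.mem_span_pair]
  rintro ⟨r, s, rfl⟩
  simp [hx, hz] at hy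

theorem unfolded_angle_lt_pi_and_gt_projected_general
    (a b c : EuclideanSpace ℝ (Fin 2)) (ha : a ≠ 0) (hb : b ≠ 0)
    (hsum : InnerProductGeometry.angle a c + InnerProductGeometry.angle c b
      = InnerProductGeometry.angle a b)
    (hab : InnerProductGeometry.angle a b < Real.pi)
    (h : ℝ) (hh : 0 < h)
    (A B C : EuclideanSpace ℝ (Fin 3))
    (hA : A 0 = a 0 ∧ A 1 = a 1 ∧ A 2 = 0)
    (hB : B 0 = b 0 ∧ B 1 = b 1 ∧ B 2 = 0)
    (hC : C 0 = c 0 ∧ C 1 = c 1 ∧ C 2 = h) :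
    InnerProductGeometry.angle A B
        < InnerProductGeometry.angle A C + InnerProductGeometry.angle C B ∧
      InnerProductGeometry.angle A C + InnerProductGeometry.angle C B < Real.pi ∧
      0 < Real.pi - (InnerProductGeometry.angle A C + InnerProductGeometry.angle C B) ∧
      Real.pi - (InnerProductGeometry.angle A C + InnerProductGeometry.angle C B)
        < Real.pi - InnerProductGeometry.angle a b := by
  have hAB : angle A B = angle a b := angle_eq_of_horizontal hA hB
  have hC_out : C ∉ Submodule.span ℝ≥0 {A, B} :=
    EuclideanSpace.notMem_span_pair_of_apply 2 hA.2.2 hB.2.2 (hC.2.2 ▸ hh.ne')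
  have hC_ne : C ≠ 0 := fun hC0 => hC_out (hC0 ▸ Submodule.zero_mem _)
  have hlt : angle A B < angle A C + angle C B :=
    (angle_le_angle_add_angle A C B).lt_of_ne fun heq =>
      ((angle_eq_angle_add_angle_iff hC_ne).1 heq).elim (by rw [hAB]; exact hab.ne) hC_out
  have hA_ne : A ≠ 0 := by rwa [← norm_ne_zero_iff, norm_eq_of_horizontal hA, norm_ne_zero_iff]
  have hB_ne : B ≠ 0 := by rwa [← norm_ne_zero_iff, norm_eq_of_horizontal hB, norm_ne_zero_iff]
  have hflat := (angle_add_angle_lt_pi_iff ha hb c).1 (hsum ▸ hab)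
  have hpi : angle A C + angle C B < π := by
    rwa [angle_add_angle_lt_pi_iff hA_ne hB_ne, norm_eq_of_horizontal hA,
      norm_eq_of_horizontal hB, inner_eq_of_horizontal hA ⟨hC.1, hC.2.1⟩,
      inner_eq_of_horizontal hB ⟨hC.1, hC.2.1⟩]
  exact ⟨hlt, hpi, by linarith, by linarith⟩

/-- Unfolding the two faces at a base vertex of a nested prismatoid versus projecting them:
`a, b` are the directions of the two base edges at the vertex (in the horizontal plane),
`c` is the horizontal projection of the lateral edge direction, pointing strictly between `a`
and `b` (`∠(a,c), ∠(c,b) > 0`, `∠(a,c) + ∠(c,b) = ∠(a,b) < π`), and the lateral edge direction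
`C = (c, h)` has positive vertical component `h`.  With `A = (a, 0)` and `B = (b, 0)` one has
`∠(A,B) < ∠(A,C) + ∠(C,B) < π`; consequently the turning angle `π - (∠(A,C) + ∠(C,B))` of the
unfolded configuration is strictly positive and strictly smaller than the turning angle
`π - ∠(a,b)` of the projected (flat) configuration. -/
theorem unfolded_angle_lt_pi_and_gt_projected
    (a b c : EuclideanSpace ℝ (Fin 2)) (ha : a ≠ 0) (hb : b ≠ 0) (hc : c ≠ 0)
    (hac : 0 < InnerProductGeometry.angle a c)
    (hcb : 0 < InnerProductGeometry.angle c b)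
    (hsum : InnerProductGeometry.angle a c + InnerProductGeometry.angle c b
      = InnerProductGeometry.angle a b)
    (hab : InnerProductGeometry.angle a b < Real.pi)
    (h : ℝ) (hh : 0 < h)
    (A B C : EuclideanSpace ℝ (Fin 3))
    (hA : A 0 = a 0 ∧ A 1 = a 1 ∧ A 2 = 0)
    (hB : B 0 = b 0 ∧ B 1 = b 1 ∧ B 2 = 0)
    (hC : C 0 = c 0 ∧ C 1 = c 1 ∧ C 2 = h) :
    InnerProductGeometry.angle A B
        < InnerProductGeometry.angle A C + InnerProductGeometry.angle C B ∧
      InnerProductGeometry.angle A C + InnerProductGeometry.angle C B < Real.pi ∧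
      0 < Real.pi - (InnerProductGeometry.angle A C + InnerProductGeometry.angle C B) ∧
      Real.pi - (InnerProductGeometry.angle A C + InnerProductGeometry.angle C B)
        < Real.pi - InnerProductGeometry.angle a b :=
  unfolded_angle_lt_pi_and_gt_projected_general a b c ha hb hsum hab h hh A B C hA hB hC
end

section
/- Let m ≥ 1, let l_0, …, l_{m−1} be positive reals, and let θ_1, …, θ_{m−1} and θ'_1, …, θ'_{m−1} be reals with 0 < θ'_j ≤ θ_j for all j. Set Φ_0 = 0 and Φ_j = θ_1 + ⋯ + θ_j, and assume Φ_j ≤ π for all j. Define vertices in ℝ² by q_0 = 0 and q_{j+1} = q_j + l_j·(cos Φ_j, sin Φ_j) for 0 ≤ j ≤ m−1, and define q'_0, …, q'_m in the same way using the angles θ'_j (with the same lengths l_j). Then for every 0 ≤ j ≤ m, the first coordinate of q'_j is greater than or equal to the first coordinate of q_j. (Geometrically: opening the turning angles of a left-turning polygonal arc, all of whose direction angles stay in [0, π], moves every vertex weakly away from the line through the starting point orthogonal to the first edge, on the side of the first edge.) -/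
open Real Finset

/-- Opening the turning angles of a left-turning polygonal arc all of whose direction angles
stay in `[0, π]` moves every vertex weakly away from the line through the starting point
orthogonal to the first edge: the arcs `q` and `q'` start at the origin with first edge in the
positive `x`-direction, have the same edge lengths `l j`, and turning angles `θ j` resp. `θ' j`
with `0 < θ' j ≤ θ j`; if all partial sums `Φ j = θ 1 + ⋯ + θ j` satisfy `Φ j ≤ π`, then every
vertex of `q'` has first coordinate at least that of the corresponding vertex of `q`. -/
theorem opened_arc_farther_from_normal_line
    (m : ℕ) (hm : 1 ≤ m) (l : ℕ → ℝ) (θ θ' : ℕ → ℝ)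
    (hl : ∀ j, j ≤ m - 1 → 0 < l j)
    (hθ : ∀ j, 1 ≤ j → j ≤ m - 1 → 0 < θ' j ∧ θ' j ≤ θ j)
    (hΦ : ∀ j, j ≤ m - 1 → (∑ i ∈ Finset.Icc 1 j, θ i) ≤ Real.pi)
    (q q' : ℕ → ℝ × ℝ)
    (hq0 : q 0 = 0) (hq0' : q' 0 = 0)
    (hq : ∀ j, j ≤ m - 1 → q (j + 1) = q j +
      l j • (Real.cos (∑ i ∈ Finset.Icc 1 j, θ i), Real.sin (∑ i ∈ Finset.Icc 1 j, θ i)))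
    (hq' : ∀ j, j ≤ m - 1 → q' (j + 1) = q' j +
      l j • (Real.cos (∑ i ∈ Finset.Icc 1 j, θ' i), Real.sin (∑ i ∈ Finset.Icc 1 j, θ' i))) :
    ∀ j, j ≤ m → (q j).1 ≤ (q' j).1 := by
  intro j
  induction j with
  | zero => intro _; simp [hq0, hq0']
  | succ j ih =>
    intro hj1
    have hjm : j ≤ m - 1 := Nat.le_sub_one_of_lt hj1
    have hΦ'le : (∑ i ∈ Finset.Icc 1 j, θ' i) ≤ ∑ i ∈ Finset.Icc 1 j, θ i := by
      apply Finset.sum_le_sum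
      intro i hi
      exact (hθ i (Finset.mem_Icc.mp hi).1 (le_trans (Finset.mem_Icc.mp hi).2 hjm)).2
    have hΦ'nonneg : 0 ≤ ∑ i ∈ Finset.Icc 1 j, θ' i :=
      Finset.sum_nonneg fun i hi =>
        le_of_lt (hθ i (Finset.mem_Icc.mp hi).1 (le_trans (Finset.mem_Icc.mp hi).2 hjm)).1
    have hcos : Real.cos (∑ i ∈ Finset.Icc 1 j, θ i) ≤
        Real.cos (∑ i ∈ Finset.Icc 1 j, θ' i) :=
      Real.cos_le_cos_of_nonneg_of_le_pi hΦ'nonneg (hΦ j hjm) hΦ'le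
    have hprev := ih (le_of_lt hj1)
    rw [hq j hjm, hq' j hjm]
    simp only [Prod.fst_add, Prod.smul_fst, smul_eq_mul]
    have := mul_le_mul_of_nonneg_left hcos (le_of_lt (hl j hjm))
    linarith
end

section
/- Let p_0, …, p_n (n ≥ 1) be the vertices of a left-turning polygonal arc in ℝ² with turning angles θ_1, …, θ_{n−1} ∈ (0, π) whose total curvature θ_1 + ⋯ + θ_{n−1} is at most π. Then for every edge index 0 ≤ j ≤ n−1 and every point x on the arc, det(p_{j+1} − p_j, x − p_j) ≥ 0; that is, the entire arc is contained in the closed left half-plane bounded by the line through each of its edges. -/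
open Real Finset

/-! Identify `ℝ²` with `ℂ`, so that `detv u v = Im (conj u * v)`. At each interior vertex the
outgoing edge is a positive multiple of `exp (i θ_j)` times the incoming one, hence edge `b` is a
nonnegative multiple of `exp (i (θ_{a+1} + ⋯ + θ_b))` times edge `a`. That partial sum lies in
`[0, π]`, so `det (e_a, e_b) ≥ 0` whenever `a ≤ b`. Writing `p_k - p_j` as a sum of edges gives
`det (e_j, p_k - p_j) ≥ 0` at every vertex, and the closed half-plane is convex, so it contains
every edge. -/

open ComplexConjugate InnerProductGeometry

namespace Complex

lemma eq_norm_div_mul_exp_angle_mul {z w : ℂ} (h : 0 < (conj z * w).im) :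
    w = ‖w / z‖ * exp (angle z w * I) * z := by
  have hz : z ≠ 0 := by rintro rfl; simp at h
  have hw : w ≠ 0 := by rintro rfl; simp at h
  have him : 0 < (w / z).im := by
    rw [div_im, ← sub_div]
    simp only [mul_im, conj_re, conj_im] at h
    exact div_pos (by linarith) (normSq_pos.2 hz)
  have hangle : angle z w = (w / z).arg := by
    rw [angle_comm, angle_eq_abs_arg hw hz, abs_of_nonneg (arg_nonneg_iff.2 him.le)]
  rw [hangle, norm_mul_exp_arg_mul_I, div_mul_cancel₀ w hz]

lemma exists_eq_mul_exp_sum_mul {z : ℕ → ℂ} {θ : ℕ → ℝ} {a b : ℕ} (hab : a ≤ b)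
    (h : ∀ i, a ≤ i → i < b → ∃ r : ℝ, 0 ≤ r ∧ z (i + 1) = r * exp (θ (i + 1) * I) * z i) :
    ∃ r : ℝ, 0 ≤ r ∧ z b = r * exp ((∑ i ∈ Finset.Ioc a b, θ i : ℝ) * I) * z a := by
  induction b, hab using Nat.le_induction with
  | base => exact ⟨1, zero_le_one, by simp⟩
  | succ b hab ih =>
    obtain ⟨r, hr, hzb⟩ := ih fun i hai hib => h i hai (by omega)
    obtain ⟨s, hs, hzs⟩ := h b hab (by omega)
    refine ⟨s * r, mul_nonneg hs hr, ?_⟩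
    rw [hzs, hzb, Finset.sum_Ioc_succ_top hab]
    push_cast
    rw [add_mul, exp_add]
    ring

lemma im_conj_mul_nonneg_of_eq_mul_exp {z w : ℂ} {r φ : ℝ} (hr : 0 ≤ r) (hφ₀ : 0 ≤ φ)
    (hφπ : φ ≤ π) (h : w = r * exp (φ * I) * z) : 0 ≤ (conj z * w).im := by
  have hconj : conj z * w = ↑(r * normSq z) * exp (φ * I) := by
    rw [h, ofReal_mul, ← mul_conj]; ring
  rw [hconj, im_ofReal_mul, exp_ofReal_mul_I_im]
  exact mul_nonneg (mul_nonneg hr (normSq_nonneg z)) (Real.sin_nonneg_of_nonneg_of_le_pi hφ₀ hφπ)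

end Complex

noncomputable def toComplex : EuclideanSpace ℝ (Fin 2) ≃ₗᵢ[ℝ] ℂ :=
  Complex.orthonormalBasisOneI.repr.symm

lemma detv_eq_im_conj_mul (u v : EuclideanSpace ℝ (Fin 2)) :
    detv u v = (conj (toComplex u) * toComplex v).im := by
  simp [detv, toComplex, Complex.orthonormalBasisOneI_repr_symm_apply]
  ring

lemma angle_toComplex (u v : EuclideanSpace ℝ (Fin 2)) :
    angle (toComplex u) (toComplex v) = angle u v :=
  toComplex.toLinearIsometry.angle_map u v

lemma isLinearMap_detv (u : EuclideanSpace ℝ (Fin 2)) : IsLinearMap ℝ (detv u) :=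
  ⟨fun v w => by simp [detv]; ring, fun c v => by simp [detv]; ring⟩

lemma detv_sum_right {ι : Type*} (u : EuclideanSpace ℝ (Fin 2)) (s : Finset ι)
    (f : ι → EuclideanSpace ℝ (Fin 2)) : detv u (∑ i ∈ s, f i) = ∑ i ∈ s, detv u (f i) :=
  map_sum (IsLinearMap.mk' _ (isLinearMap_detv u)) f s

lemma detv_comm (u v : EuclideanSpace ℝ (Fin 2)) : detv u v = -detv v u := by
  simp only [detv]; ring

lemma convex_setOf_detv_sub_nonneg (u q : EuclideanSpace ℝ (Fin 2)) :
    Convex ℝ {x | 0 ≤ detv u (x - q)} := by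
  simp_rw [(isLinearMap_detv u).map_sub, sub_nonneg]
  exact convex_halfSpace_ge (isLinearMap_detv u) _

namespace IsLeftTurningArc

variable {n : ℕ} {p : ℕ → EuclideanSpace ℝ (Fin 2)} {θ : ℕ → ℝ}

lemma detv_edge_edge_nonneg (harc : IsLeftTurningArc p θ n)
    (hcurv : ∑ j ∈ Icc 1 (n - 1), θ j ≤ π) {a b : ℕ} (hab : a ≤ b) (hb : b ≤ n - 1) :
    0 ≤ detv (p (a + 1) - p a) (p (b + 1) - p b) := by
  have hθ : ∀ i ∈ Icc 1 (n - 1), 0 ≤ θ i := fun i hi =>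
    (harc.2 i (mem_Icc.1 hi).1 (mem_Icc.1 hi).2).1.le
  have hsub : Ioc a b ⊆ Icc 1 (n - 1) := fun i hi => by simp only [mem_Ioc, mem_Icc] at hi ⊢; omega
  have hturn : ∀ i, a ≤ i → i < b → ∃ r : ℝ, 0 ≤ r ∧ toComplex (p (i + 1 + 1) - p (i + 1)) =
      r * Complex.exp (θ (i + 1) * Complex.I) * toComplex (p (i + 1) - p i) := by
    intro i _ hib
    obtain ⟨-, -, hdet, hangle⟩ := harc.2 (i + 1) (by omega) (by omega)
    simp only [Nat.add_sub_cancel, detv_eq_im_conj_mul] at hdet hangle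
    rw [← hangle, ← angle_toComplex]
    exact ⟨_, norm_nonneg _, Complex.eq_norm_div_mul_exp_angle_mul hdet⟩
  obtain ⟨r, hr, heq⟩ :=
    Complex.exists_eq_mul_exp_sum_mul (z := fun i => toComplex (p (i + 1) - p i)) hab hturn
  rw [detv_eq_im_conj_mul]
  exact Complex.im_conj_mul_nonneg_of_eq_mul_exp hr (sum_nonneg fun i hi => hθ i (hsub hi))
    ((sum_le_sum_of_subset_of_nonneg hsub fun i hi _ => hθ i hi).trans hcurv) heq

lemma detv_vertex_nonneg (harc : IsLeftTurningArc p θ n)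
    (hcurv : ∑ j ∈ Icc 1 (n - 1), θ j ≤ π) {j k : ℕ} (hj : j ≤ n - 1) (hk : k ≤ n - 1 + 1) :
    0 ≤ detv (p (j + 1) - p j) (p k - p j) := by
  rcases le_total j k with hjk | hkj
  · rw [← sum_Ico_sub p hjk, detv_sum_right]
    exact sum_nonneg fun i hi => harc.detv_edge_edge_nonneg hcurv (by simp at hi; omega)
      (by simp at hi; omega)
  · rw [← neg_sub (p j) (p k), ← sum_Ico_sub p hkj, (isLinearMap_detv _).map_neg, detv_sum_right,
      ← sum_neg_distrib]
    refine sum_nonneg fun i hi => ?_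
    rw [detv_comm, neg_neg]
    exact harc.detv_edge_edge_nonneg hcurv (by simp at hi; omega) hj

end IsLeftTurningArc

theorem arc_in_left_halfplane_of_each_edge_general
    (n : ℕ) (p : ℕ → EuclideanSpace ℝ (Fin 2)) (θ : ℕ → ℝ)
    (harc : IsLeftTurningArc p θ n)
    (hcurv : (∑ j ∈ Finset.Icc 1 (n - 1), θ j) ≤ Real.pi) :
    ∀ j, j ≤ n - 1 → ∀ x : EuclideanSpace ℝ (Fin 2),
      (∃ k, k ≤ n - 1 ∧ x ∈ segment ℝ (p k) (p (k + 1))) →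
      0 ≤ detv (p (j + 1) - p j) (x - p j) := by
  rintro j hj x ⟨k, hk, hx⟩
  exact (convex_setOf_detv_sub_nonneg _ _).segment_subset
    (harc.detv_vertex_nonneg hcurv hj (by omega)) (harc.detv_vertex_nonneg hcurv hj (by omega)) hx

/-- A left-turning polygonal arc of total curvature at most `π` lies in the closed left
half-plane bounded by the line through each of its edges: for every edge index `j` and every
point `x` on the arc, `det(p (j+1) - p j, x - p j) ≥ 0`. -/
theorem arc_in_left_halfplane_of_each_edge
    (n : ℕ) (hn : 1 ≤ n) (p : ℕ → EuclideanSpace ℝ (Fin 2)) (θ : ℕ → ℝ)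
    (harc : IsLeftTurningArc p θ n)
    (hcurv : (∑ j ∈ Finset.Icc 1 (n - 1), θ j) ≤ Real.pi) :
    ∀ j, j ≤ n - 1 → ∀ x : EuclideanSpace ℝ (Fin 2),
      (∃ k, k ≤ n - 1 ∧ x ∈ segment ℝ (p k) (p (k + 1))) →
      0 ≤ detv (p (j + 1) - p j) (x - p j) :=
  arc_in_left_halfplane_of_each_edge_general n p θ harc hcurv
end
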